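/- arXiv:2112.00673 — 5 statements merged into one kernel-verified Lean document; each statement's English description precedes it below -/
import Mathlib

section
/- Let μ be a permutation of [n] with set T of non-fixed-points, |T| = t ≥ 1. Then there exists a subset I ⊆ T with |I| ≥ ⌈t/3⌉ such that I ∩ μ(I) = ∅. -/
/-!
Greedy selection: put any non-fixed point `i` into `I` and discard `i`, `μ i` and `μ⁻¹ i`.
Discarding `μ i` and `μ⁻¹ i` keeps `μ i ∉ I` and `i ∉ μ(I)` for every later choice, so each
selected point costs at most three non-fixed points.
-/

open Finset

theorem Finset.card_le_card_erase_erase_erase_add_three {α : Type*} [DecidableEq α]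
    (s : Finset α) (a b c : α) : #s ≤ #(((s.erase a).erase b).erase c) + 3 := by
  have hab : #s - 1 ≤ #(s.erase a) := pred_card_le_card_erase
  have hb : #(s.erase a) - 1 ≤ #((s.erase a).erase b) := pred_card_le_card_erase
  have hc : #((s.erase a).erase b) - 1 ≤ #(((s.erase a).erase b).erase c) :=
    pred_card_le_card_erase
  omega

namespace Equiv.Perm

variable {α : Type*} [DecidableEq α] (σ : Perm α)

theorem disjoint_image_insert {I : Finset α} {i : α} (hI : _root_.Disjoint I (I.image σ))
    (hi : σ i ≠ i) (hσi : σ i ∉ I) (hσi' : σ.symm i ∉ I) :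
    _root_.Disjoint (insert i I) ((insert i I).image σ) := by
  have hiI : i ∉ I.image σ := fun h => by
    obtain ⟨y, hy, rfl⟩ := mem_image.mp h
    exact hσi' (by simpa using hy)
  rw [image_insert, disjoint_insert_left, disjoint_insert_right, mem_insert, not_or]
  exact ⟨⟨hi.symm, hiI⟩, hσi, hI⟩

theorem exists_subset_disjoint_image_of_forall_ne (T : Finset α) (hT : ∀ i ∈ T, σ i ≠ i) :
    ∃ I ⊆ T, (#T + 2) / 3 ≤ #I ∧ _root_.Disjoint I (I.image σ) := by
  induction T using Finset.strongInduction with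
  | H T ih =>
    rcases T.eq_empty_or_nonempty with rfl | ⟨i, hi⟩
    · exact ⟨∅, empty_subset _, by simp, by simp⟩
    set S := ((T.erase i).erase (σ i)).erase (σ.symm i) with hS
    have hST : S ⊆ T := fun x hx => mem_of_mem_erase (mem_of_mem_erase (mem_of_mem_erase hx))
    have hiS : i ∉ S := by simp [hS]
    obtain ⟨I, hIS, hIcard, hIdisj⟩ :=
      ih S (ssubset_of_subset_of_ne hST fun h => hiS (h ▸ hi)) fun x hx => hT x (hST hx)
    refine ⟨insert i I, insert_subset hi (hIS.trans hST), ?_, ?_⟩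
    · have : #T ≤ #S + 3 := card_le_card_erase_erase_erase_add_three T i (σ i) (σ.symm i)
      rw [card_insert_of_notMem fun h => hiS (hIS h)]
      omega
    · refine disjoint_image_insert σ hIdisj (hT i hi) (fun h => ?_) (fun h => ?_) <;>
        simpa [hS] using hIS h

end Equiv.Perm

theorem stmt8_general (n : ℕ) (μ : Equiv.Perm (Fin n))
    (T : Finset (Fin n)) (hT : T = univ.filter (fun i => μ i ≠ i)) :
    ∃ I ⊆ T, (T.card + 2) / 3 ≤ I.card ∧ Disjoint I (I.image ⇑μ) :=
  Equiv.Perm.exists_subset_disjoint_image_of_forall_ne μ T fun i hi => by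
    rw [hT, mem_filter] at hi
    exact hi.2

/-- For a permutation `μ` of `[n]` with set `T` of non-fixed-points, `|T| = t ≥ 1`, there is a
subset `I ⊆ T` with `|I| ≥ ⌈t/3⌉` such that `I ∩ μ(I) = ∅`. -/
theorem stmt8 (n : ℕ) (μ : Equiv.Perm (Fin n))
    (T : Finset (Fin n)) (hT : T = univ.filter (fun i => μ i ≠ i))
    (ht : 1 ≤ T.card) :
    ∃ I ⊆ T, (T.card + 2) / 3 ≤ I.card ∧ Disjoint I (I.image ⇑μ) :=
  stmt8_general n μ T hT
end

section
/- A uniformly random n-vertex graph G = ([n], E), where E is a uniformly random subset of the set of unordered pairs of [n], is (n/20)-robustly self-ordered with probability 1 - exp(-Ω(n)). -/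
open Finset

open scoped Classical

/-!
Fix a permutation `μ` moving `m` vertices. It moves at least `m(n-2)/2` potential edges, and
among these there is a set `M` of at least a third of them with `μ(M)` disjoint from `M`. For
`e ∈ M`, the edge `μ e` lies in `E ∆ μ(E)` whenever `E` contains exactly one of `e` and `μ e`, so
`E` is determined by `E \ M` together with a subset of `M` of size at most `|E ∆ μ(E)|`. Hence
only a fraction `2^(nm/20) (3/4)^|M| ≤ exp(1/12 - n/150)^m` of the edge sets satisfy
`|E ∆ μ(E)| < nm/20`. Summing over `μ ≠ 1` with `∑_μ ρ^|supp μ| ≤ (1 + nρ)^n` bounds the bad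
fraction by `2n² exp(1/12 - n/150) ≤ exp(-n/300)`.
-/

open Real

theorem Finset.exists_subset_apply_notMem {β : Type*} [DecidableEq β] {f : β → β}
    (hf : Function.Injective f) (M : Finset β) (hM : ∀ x ∈ M, f x ≠ x) :
    ∃ M' ⊆ M, (∀ x ∈ M', f x ∉ M') ∧ #M ≤ 3 * #M' := by
  induction M using Finset.strongInduction with
  | H M ih =>
  rcases M.eq_empty_or_nonempty with rfl | ⟨x, hx⟩
  · exact ⟨∅, by simp⟩
  -- by injectivity, choosing `x` rules out at most three elements: `x`, `f x` and `f⁻¹ x`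
  set N := {x, f x} ∪ {y ∈ M | f y = x}
  have hxN : x ∈ N := by simp [N]
  obtain ⟨M', hM'M, hM', hcard⟩ :=
    ih (M \ N) ((ssubset_iff_of_subset sdiff_subset).2 ⟨x, hx, fun h => (mem_sdiff.1 h).2 hxN⟩)
      (fun y hy => hM y (mem_sdiff.1 hy).1)
  have hM'N : ∀ y ∈ M', y ∈ M ∧ y ∉ N := fun y hy => mem_sdiff.1 (hM'M hy)
  refine ⟨insert x M', insert_subset hx (hM'M.trans sdiff_subset), ?_, ?_⟩
  · simp only [mem_insert, forall_eq_or_imp]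
    refine ⟨?_, fun y hy => ?_⟩
    · rintro (h | h)
      exacts [hM x hx h, (hM'N _ h).2 (by simp [N])]
    · rintro (h | h)
      exacts [(hM'N y hy).2 (by simp [N, (hM'N y hy).1, h]), hM' y hy h]
  · have hN : #N ≤ 3 := (card_union_le _ _).trans (add_le_add card_le_two
      (card_le_one.2 fun a ha b hb => hf ((mem_filter.1 ha).2.trans (mem_filter.1 hb).2.symm)))
    rw [card_insert_of_notMem fun h => (hM'N x h).2 hxN]
    have := card_le_card_sdiff_add_card (s := M) (t := N)
    omega

theorem Finset.card_powerset_filter_card_le_le {ι : Type*} (s : Finset ι) (t : ℕ) {a : ℝ}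
    (ha₀ : 0 < a) (ha₁ : a ≤ 1) :
    (#{B ∈ s.powerset | #B ≤ t} : ℝ) ≤ (a + 1) ^ #s / a ^ t := by
  rw [← sum_pow_mul_eq_add_pow, sum_div, card_eq_sum_ones, Nat.cast_sum, sum_filter]
  gcongr with B
  split_ifs with h
  · rw [one_pow, mul_one, Nat.cast_one, le_div_iff₀ (by positivity), one_mul]
    exact pow_le_pow_of_le_one ha₀.le ha₁ h
  · positivity

theorem Finset.card_powerset_filter_card_symmDiff_image_le {β : Type*} [DecidableEq β]
    {f : β → β} (hf : Function.Injective f) {U M : Finset β} (hMU : M ⊆ U)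
    (hM : ∀ x ∈ M, f x ∉ M) (t : ℕ) :
    #{E ∈ U.powerset | #(symmDiff E (E.image f)) ≤ t} ≤
      2 ^ (#U - #M) * #{B ∈ M.powerset | #B ≤ t} := by
  let code : Finset β → Finset β × Finset β :=
    fun E => (E \ M, {x ∈ M | ¬(x ∈ E ↔ f x ∈ E)})
  calc _ ≤ #((U \ M).powerset ×ˢ {B ∈ M.powerset | #B ≤ t}) := by
        refine card_le_card_of_injOn code (fun E hE => ?_) (fun E₁ _ E₂ _ h => ?_)
        · simp only [coe_filter, mem_powerset, Set.mem_ofPred_eq] at hE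
          simp only [code, coe_product, coe_powerset, coe_filter, Set.mem_prod, Set.mem_preimage,
            mem_powerset, Set.mem_ofPred_eq]
          refine ⟨sdiff_subset_sdiff hE.1 le_rfl, filter_subset _ _, le_trans ?_ hE.2⟩
          refine card_le_card_of_injOn f (fun x hx => ?_) hf.injOn
          simp only [coe_filter, Set.mem_ofPred_eq] at hx
          simp only [coe_symmDiff, Set.mem_symmDiff, mem_coe, hf.mem_finset_image]
          tauto
        -- for `x ∈ M`, whether `f x ∈ E` is read off `E \ M`, then `x ∈ E` off the second set
        · simp only [code, Prod.mk.injEq, Finset.ext_iff, mem_sdiff, mem_filter] at h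
          ext x
          by_cases hx : x ∈ M
          · have := h.1 (f x)
            have := h.2 x
            simp_all
            tauto
          · simpa [hx] using h.1 x
    _ = _ := by rw [card_product, card_powerset, card_sdiff_of_subset hMU]

theorem two_pow_mul_three_quarters_pow_le (t k : ℕ) :
    (2 : ℝ) ^ t * (3 / 4) ^ k ≤ exp (7 / 10 * t - k / 4) := by
  have h₂ : (2 : ℝ) ≤ exp (7 / 10) :=
    calc (2 : ℝ) = exp (log 2) := (exp_log two_pos).symm
      _ ≤ exp (7 / 10) := exp_le_exp.2 (by linarith [log_two_lt_d9])
  have h₃ : (3 / 4 : ℝ) ≤ exp (-(1 / 4)) := by linarith [add_one_le_exp (-(1 / 4))]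
  calc (2 : ℝ) ^ t * (3 / 4) ^ k ≤ exp (7 / 10) ^ t * exp (-(1 / 4)) ^ k := by gcongr
    _ = exp (7 / 10 * t - k / 4) := by
      rw [← exp_nat_mul, ← exp_nat_mul, ← exp_add]
      ring_nf

theorem one_add_pow_sub_one_le {x : ℝ} (hx : 0 ≤ x) {n : ℕ} (hnx : n * x ≤ 1) :
    (1 + x) ^ n - 1 ≤ 2 * (n * x) := by
  have h₁ : (1 + x) ^ n ≤ exp (n * x) := by
    rw [exp_nat_mul]
    exact pow_le_pow_left₀ (by linarith) (by linarith [add_one_le_exp x]) n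
  have hnx₀ : 0 ≤ n * x := by positivity
  have h₂ := abs_exp_sub_one_le (x := n * x) (by rwa [abs_of_nonneg hnx₀])
  rw [abs_of_nonneg hnx₀] at h₂
  linarith [le_abs_self (exp (n * x) - 1)]

theorem two_mul_sq_mul_exp_le {n : ℝ} (hn : 10 ^ 9 ≤ n) :
    2 * (n * (n * exp (1 / 12 - n / 150))) ≤ exp (-(1 / 300) * n) := by
  have hsplit : exp (1 / 12 - n / 150) = exp (1 / 12) * exp (-(2 * (n / 300))) := by
    rw [← exp_add]
    ring_nf
  have hsplit' : exp (-(1 / 300) * n) = exp (n / 300) * exp (-(2 * (n / 300))) := by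
    rw [← exp_add]
    ring_nf
  have hexp : exp (1 / 12) ≤ 3 := by
    linarith [exp_le_exp.2 (show (1 / 12 : ℝ) ≤ 1 by norm_num), exp_one_lt_d9]
  have hcube : (n / 300) ^ 3 / 6 ≤ exp (n / 300) := by
    simpa [Nat.factorial] using pow_div_factorial_le_exp _ (by positivity : 0 ≤ n / 300) 3
  have hn₂ : 36 * 300 ^ 3 * n ^ 2 ≤ n ^ 3 := by nlinarith [sq_nonneg n]
  have key : 2 * (n * (n * exp (1 / 12))) ≤ exp (n / 300) := by nlinarith [sq_nonneg n]
  rw [hsplit, hsplit']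
  nlinarith [exp_pos (-(2 * (n / 300)))]

variable {α : Type*} [Fintype α] [DecidableEq α]

variable (α) in
def potentialEdges : Finset (Sym2 α) := univ.filter fun e => ¬e.IsDiag

def Equiv.Perm.displacement (μ : Equiv.Perm α) (E : Finset (Sym2 α)) : ℕ :=
  #(symmDiff E (E.image (Sym2.map μ)))

namespace Equiv.Perm

theorem card_support_mul_le_card_moved_edges (μ : Equiv.Perm α) :
    #μ.support * (Fintype.card α - 2) ≤ #{e : Sym2 α | ¬e.IsDiag ∧ e.map μ ≠ e} * 2 := by
  refine card_mul_le_card_mul (fun v e => v ∈ e) (fun v hv => ?_) (fun e _ => ?_)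
  · rw [mem_support] at hv
    calc Fintype.card α - 2 ≤ #((univ \ {v, μ v}).image (s(v, ·))) := by
          rw [card_image_of_injective _ fun _ _ => Sym2.congr_right.1, card_univ_sdiff]
          exact Nat.sub_le_sub_left card_le_two _
      _ ≤ _ := by
          refine card_le_card fun e he => ?_
          simp only [mem_image, mem_sdiff, mem_insert, mem_singleton, not_or] at he
          obtain ⟨u, ⟨-, hvu, hμu⟩, rfl⟩ := he
          simp [bipartiteAbove, Ne.symm hvu, hv, Ne.symm hμu]
  · induction e using Sym2.ind with | _ a b =>
    refine (card_le_card fun w hw => ?_).trans (card_le_two (a := a) (b := b))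
    simpa [bipartiteBelow] using (mem_filter.1 hw).2

theorem card_filter_displacement_le_le (μ : Equiv.Perm α) (t : ℕ) :
    (#{E ∈ (potentialEdges α).powerset | μ.displacement E ≤ t} : ℝ) ≤
      2 ^ #(potentialEdges α) *
        exp (7 / 10 * t - #μ.support * (Fintype.card α - 2 : ℝ) / 24) := by
  have hinj := Sym2.map.injective μ.injective
  obtain ⟨M, hM, hMμ, hMcard⟩ := exists_subset_apply_notMem hinj
    {e : Sym2 α | ¬e.IsDiag ∧ e.map μ ≠ e} (fun e he => (mem_filter.1 he).2.2)
  have hMU : M ⊆ potentialEdges α :=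
    fun e he => mem_filter.2 ⟨mem_univ e, (mem_filter.1 (hM he)).2.1⟩
  have hK : (#μ.support * (Fintype.card α - 2 : ℝ)) ≤ 6 * #M := by
    have hmoved := μ.card_support_mul_le_card_moved_edges
    have h : #μ.support * (Fintype.card α - 2) ≤ 6 * #M := by omega
    calc (#μ.support * (Fintype.card α - 2 : ℝ))
        ≤ #μ.support * ((Fintype.card α - 2 : ℕ) : ℝ) := by
          gcongr
          have : Fintype.card α ≤ Fintype.card α - 2 + 2 := by omega
          exact sub_le_iff_le_add.2 (by exact_mod_cast this)
      _ ≤ 6 * #M := by exact_mod_cast h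
  calc _ ≤ ((2 ^ (#(potentialEdges α) - #M) * #{B ∈ M.powerset | #B ≤ t} : ℕ) : ℝ) := by
        exact_mod_cast card_powerset_filter_card_symmDiff_image_le hinj hMU hMμ t
    _ ≤ 2 ^ (#(potentialEdges α) - #M) * ((1 / 2 + 1) ^ #M / (1 / 2) ^ t) := by
        push_cast
        gcongr
        exact M.card_powerset_filter_card_le_le t (by norm_num) (by norm_num)
    _ = 2 ^ #(potentialEdges α) * (2 ^ t * (3 / 4) ^ #M) := by
        rw [← pow_sub_mul_pow (2 : ℝ) (card_le_card hMU), mul_assoc, div_eq_mul_inv,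
          ← inv_pow, one_div, inv_inv, mul_left_comm _ (2 ^ t), ← mul_pow]
        norm_num
        ring
    _ ≤ _ := by
        gcongr
        refine (two_pow_mul_three_quarters_pow_le t #M).trans (exp_le_exp.2 ?_)
        linarith

theorem card_filter_displacement_lt_le (μ : Equiv.Perm α) :
    (#{E ∈ (potentialEdges α).powerset |
        (μ.displacement E : ℝ) < Fintype.card α / 20 * #μ.support} : ℝ) ≤
      2 ^ #(potentialEdges α) * exp (1 / 12 - Fintype.card α / 150) ^ #μ.support := by
  set t := ⌊(Fintype.card α : ℝ) / 20 * #μ.support⌋₊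
  have ht : (t : ℝ) ≤ Fintype.card α / 20 * #μ.support := Nat.floor_le (by positivity)
  calc _ ≤ (#{E ∈ (potentialEdges α).powerset | μ.displacement E ≤ t} : ℝ) := by
        gcongr with E
        exact fun h => Nat.le_floor h.le
    _ ≤ _ := μ.card_filter_displacement_le_le t
    -- `(7/10)(n/20) - (n-2)/24 = 1/12 - n/150`
    _ ≤ _ := by
        rw [← exp_nat_mul]
        gcongr
        linarith

theorem sum_pow_card_support_le {ρ : ℝ} (hρ : 0 ≤ ρ) :
    ∑ μ : Equiv.Perm α, ρ ^ #μ.support ≤ (1 + Fintype.card α * ρ) ^ Fintype.card α := by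
  set g : α → α → ℝ := fun v w => if w = v then 1 else ρ
  have hg : ∀ v w, 0 ≤ g v w := fun v w => by positivity
  calc ∑ μ : Equiv.Perm α, ρ ^ #μ.support = ∑ μ : Equiv.Perm α, ∏ v, g v (μ v) := by
        refine sum_congr rfl fun μ _ => ?_
        rw [prod_ite]
        simp [support]
    _ ≤ ∑ f : α → α, ∏ v, g v (f v) :=
        (sum_map univ ⟨_, DFunLike.coe_injective⟩ fun f => ∏ v, g v (f v)).symm.trans_le
          (sum_le_univ_sum_of_nonneg fun f => prod_nonneg fun v _ => hg v (f v))
    _ = ∏ v, ∑ w, g v w := (Fintype.prod_sum _).symm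
    _ ≤ ∏ _v : α, (1 + Fintype.card α * ρ) := by
        gcongr with v
        calc ∑ w, g v w ≤ ∑ w, ((if w = v then 1 else 0) + ρ) :=
              sum_le_sum fun w _ => by simp only [g]; split_ifs <;> linarith
          _ = _ := by simp [sum_add_distrib]
    _ = _ := by simp

end Equiv.Perm

theorem card_filter_not_forall_le_displacement_le (c : ℝ) :
    (#{E ∈ (potentialEdges α).powerset |
        ¬∀ μ : Equiv.Perm α, c * #μ.support ≤ (μ.displacement E : ℝ)} : ℝ) ≤
      ∑ μ ∈ (univ : Finset (Equiv.Perm α)).erase 1,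
        (#{E ∈ (potentialEdges α).powerset |
          (μ.displacement E : ℝ) < c * #μ.support} : ℝ) := by
  have hsub : {E ∈ (potentialEdges α).powerset |
        ¬∀ μ : Equiv.Perm α, c * #μ.support ≤ (μ.displacement E : ℝ)} ⊆
      ((univ : Finset (Equiv.Perm α)).erase 1).biUnion fun μ =>
        {E ∈ (potentialEdges α).powerset | (μ.displacement E : ℝ) < c * #μ.support} := by
    intro E hE
    simp only [mem_filter, not_forall, not_le] at hE
    obtain ⟨hE, μ, hμ⟩ := hE
    have hμ₁ : μ ≠ 1 := by
      rintro rfl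
      exact (Nat.cast_nonneg _).not_gt (by simpa using hμ)
    exact mem_biUnion.2 ⟨μ, mem_erase.2 ⟨hμ₁, mem_univ μ⟩, mem_filter.2 ⟨hE, hμ⟩⟩
  exact_mod_cast (card_le_card hsub).trans card_biUnion_le

/-- A uniformly random `n`-vertex graph (each of the `C(n,2)` potential edges present
independently with probability `1/2`) is `(n/20)`-robustly self-ordered with probability
`1 - exp(-Ω(n))`: the fraction of edge sets violating this is at most `exp(-c·n)`. -/
theorem stmt9 : ∃ c : ℝ, 0 < c ∧ ∃ N : ℕ, ∀ n : ℕ, N ≤ n →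
    (((Finset.univ.filter (fun e : Sym2 (Fin n) => ¬ e.IsDiag)).powerset.filter
        (fun E => ¬ ∀ μ : Equiv.Perm (Fin n),
          ((n : ℝ) / 20) * ((univ.filter (fun i => μ i ≠ i)).card : ℝ) ≤
            ((symmDiff E (E.image (Sym2.map ⇑μ))).card : ℝ))).card : ℝ) ≤
      Real.exp (-c * n) *
        ((Finset.univ.filter (fun e : Sym2 (Fin n) => ¬ e.IsDiag)).powerset.card : ℝ) := by
  refine ⟨1 / 300, by norm_num, 10 ^ 9, fun n hn => ?_⟩
  set ρ := exp (1 / 12 - n / 150)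
  set D := #(potentialEdges (Fin n))
  have hρ : 2 * (n * (n * ρ)) ≤ exp (-(1 / 300) * n) :=
    two_mul_sq_mul_exp_le (by exact_mod_cast hn)
  have hρ₁ : n * (n * ρ) ≤ 1 := by
    have : -(1 / 300) * (n : ℝ) ≤ 0 := by linarith [n.cast_nonneg (α := ℝ)]
    linarith [exp_le_one_iff.2 this]
  calc _ ≤ ∑ μ ∈ (univ : Finset (Equiv.Perm (Fin n))).erase 1,
          (#{E ∈ (potentialEdges (Fin n)).powerset |
            (μ.displacement E : ℝ) < n / 20 * #μ.support} : ℝ) :=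
        card_filter_not_forall_le_displacement_le _
    _ ≤ ∑ μ ∈ (univ : Finset (Equiv.Perm (Fin n))).erase 1, 2 ^ D * ρ ^ #μ.support :=
        sum_le_sum fun μ _ => by
          simpa only [Fintype.card_fin] using μ.card_filter_displacement_lt_le
    _ = 2 ^ D * (∑ μ : Equiv.Perm (Fin n), ρ ^ #μ.support - 1) := by
        rw [← mul_sum, ← add_sum_erase _ _ (mem_univ 1)]
        simp
    _ ≤ 2 ^ D * ((1 + n * ρ) ^ n - 1) := by
        gcongr
        simpa using Equiv.Perm.sum_pow_card_support_le (α := Fin n) (exp_pos _).le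
    _ ≤ 2 ^ D * (2 * (n * (n * ρ))) := by
        gcongr
        exact one_add_pow_sub_one_le (by positivity) hρ₁
    _ ≤ _ := by
        rw [card_powerset, Nat.cast_pow, Nat.cast_two, mul_comm]
        exact mul_le_mul_of_nonneg_right hρ (by positivity)
end

section
/- Fix a permutation μ of [n] with non-fixed-point set T, and fix disjoint sets I ⊆ T and J ⊆ [n] with I ∩ μ(I) = ∅, μ(J) ∩ I = ∅, and J ∩ I = ∅. For a uniformly random graph G = ([n], E) (each pair independently an edge with probability 1/2), and for each (u,v) ∈ J × I, let χ_{u,v} be the indicator that exactly one of {u,v} and {μ(u), μ(v)} is an edge of G. Then each χ_{u,v} equals 1 with probability exactly 1/2, and the random variables {χ_{u,v} : (u,v) ∈ J × I} are mutually independent. -/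
/-!
Toggling the edges `{μ u, μ v}` indexed by a set of pairs `(u, v) ∈ J × I` flips exactly the
corresponding indicators `χ_{u,v}`, because these edges are pairwise distinct and never of the
form `{u', v'}` with `(u', v') ∈ J × I`. Toggling a fixed edge set is an involution on graphs,
so all `2^{|J × I|}` outcome patterns are attained by equally many graphs.
-/

open Finset

open scoped Classical

section XorClass

variable {α ι : Type*} [DecidableEq α] [DecidableEq ι]

/-- Edge sets `E ⊆ U` whose indicator pattern `χ_i = [f i ∈ E] xor [g i ∈ E]` on `s` is `T`. -/
def xorClass (U : Finset α) (s : Finset ι) (f g : ι → α) (T : Finset ι) : Finset (Finset α) :=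
  U.powerset.filter fun E => ∀ i ∈ s, (Xor (f i ∈ E) (g i ∈ E) ↔ i ∈ T)

variable {U : Finset α} {s : Finset ι} {f g : ι → α}

theorem symmDiff_mem_xorClass {T T' : Finset ι} {E D : Finset α} (hDU : D ⊆ U)
    (hfD : ∀ i ∈ s, f i ∉ D) (hgD : ∀ i ∈ s, g i ∈ D ↔ i ∈ symmDiff T T')
    (hE : E ∈ xorClass U s f g T) : symmDiff E D ∈ xorClass U s f g T' := by
  simp only [xorClass, mem_filter, mem_powerset] at hE ⊢
  refine ⟨symmDiff_le_sup.trans (sup_le hE.1 hDU), fun i hi => ?_⟩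
  have hET := hE.2 i hi
  have hgi := hgD i hi
  simp only [mem_symmDiff] at hgi ⊢
  simp only [Xor] at hET ⊢
  have := hfD i hi
  tauto

theorem card_xorClass_eq (hg : Set.InjOn g s) (hgU : ∀ i ∈ s, g i ∈ U)
    (hfg : ∀ i ∈ s, ∀ j ∈ s, f i ≠ g j) (T T' : Finset ι) :
    #(xorClass U s f g T) = #(xorClass U s f g T') := by
  set D := (s.filter (· ∈ symmDiff T T')).image g
  have hDU : D ⊆ U := by
    simp only [D, image_subset_iff, mem_filter]
    exact fun i hi => hgU i hi.1
  have hfD : ∀ i ∈ s, f i ∉ D := by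
    simp only [D, mem_image, mem_filter, not_exists, not_and]
    exact fun i hi j hj => (hfg i hi j hj.1).symm
  have hgD : ∀ i ∈ s, g i ∈ D ↔ i ∈ symmDiff T T' := by
    intro i hi
    simp only [D, mem_image, mem_filter]
    exact ⟨fun ⟨j, ⟨hj, hjT⟩, hji⟩ => hg hj hi hji ▸ hjT, fun h => ⟨i, ⟨hi, h⟩, rfl⟩⟩
  have hgD' : ∀ i ∈ s, g i ∈ D ↔ i ∈ symmDiff T' T := by
    simpa only [symmDiff_comm T] using hgD
  exact card_bij' (fun E _ => symmDiff E D) (fun E _ => symmDiff E D)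
    (fun _ => symmDiff_mem_xorClass hDU hfD hgD) (fun _ => symmDiff_mem_xorClass hDU hfD hgD')
    (fun E _ => symmDiff_symmDiff_cancel_right D E) (fun E _ => symmDiff_symmDiff_cancel_right D E)

theorem filter_filter_xor_eq (T : Finset ι) (hTs : T ⊆ s) :
    U.powerset.filter (fun E => s.filter (fun i => Xor (f i ∈ E) (g i ∈ E)) = T) =
      xorClass U s f g T := by
  refine filter_congr fun E _ => ?_
  simp only [Finset.ext_iff, mem_filter]
  constructor
  · intro h i hi
    rw [← h i, and_iff_right hi]
  · intro h i
    by_cases hi : i ∈ s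
    · rw [and_iff_right hi, h i hi]
    · exact iff_of_false (fun h' => hi h'.1) (fun hiT => hi (hTs hiT))

theorem card_xorClass_mul_two_pow (hg : Set.InjOn g s) (hgU : ∀ i ∈ s, g i ∈ U)
    (hfg : ∀ i ∈ s, ∀ j ∈ s, f i ≠ g j) (T : Finset ι) :
    #(xorClass U s f g T) * 2 ^ #s = #U.powerset := by
  have hfibre : ∀ T' ∈ s.powerset,
      #(U.powerset.filter fun E => s.filter (fun i => Xor (f i ∈ E) (g i ∈ E)) = T') =
        #(xorClass U s f g T) := fun T' hT' => by
    rw [filter_filter_xor_eq T' (mem_powerset.1 hT'), card_xorClass_eq hg hgU hfg T T']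
  rw [card_eq_sum_card_fiberwise (f := fun E => s.filter fun i => Xor (f i ∈ E) (g i ∈ E))
      (s := U.powerset) (t := s.powerset)
      fun E _ => mem_powerset.2 (filter_subset _ s),
    sum_const_nat hfibre, card_powerset, mul_comm]

end XorClass

section PermutedPairs

variable {V : Type*} {μ : V → V} {I J : Finset V}

theorem injOn_mk_map_product (hμ : μ.Injective) (hJI : Disjoint J I) :
    Set.InjOn (fun p : V × V => s(μ p.1, μ p.2)) ↑(J ×ˢ I) := by
  rintro ⟨u, v⟩ huv ⟨u', v'⟩ huv' h
  simp only [coe_product, Set.mem_prod, mem_coe, Sym2.eq_iff] at huv huv' h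
  rcases h with ⟨h₁, h₂⟩ | ⟨h₁, -⟩
  · rw [hμ h₁, hμ h₂]
  · exact (disjoint_left.1 hJI huv.1 (hμ h₁ ▸ huv'.2)).elim

theorem not_isDiag_mk_map (hμ : μ.Injective) (hJI : Disjoint J I) {p : V × V}
    (hp : p ∈ J ×ˢ I) : ¬ s(μ p.1, μ p.2).IsDiag := by
  rw [mem_product] at hp
  rw [Sym2.mk_isDiag_iff]
  exact fun h => disjoint_left.1 hJI hp.1 (hμ h ▸ hp.2)

theorem mk_ne_mk_map [DecidableEq V] (hII : Disjoint I (I.image μ))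
    (hJI : Disjoint (J.image μ) I) {p q : V × V} (hp : p ∈ J ×ˢ I) (hq : q ∈ J ×ˢ I) :
    s(p.1, p.2) ≠ s(μ q.1, μ q.2) := by
  rw [mem_product] at hp hq
  intro h
  rcases Sym2.eq_iff.1 h with ⟨-, h⟩ | ⟨-, h⟩
  · exact disjoint_left.1 hII hp.2 (h ▸ mem_image_of_mem μ hq.2)
  · exact disjoint_left.1 hJI (h ▸ mem_image_of_mem μ hq.1) hp.2

end PermutedPairs

theorem stmt10_general (n : ℕ) (μ : Equiv.Perm (Fin n)) (I J : Finset (Fin n))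
    (hII : Disjoint I (I.image ⇑μ))
    (hJI : Disjoint (J.image ⇑μ) I)
    (hJI' : Disjoint J I) :
    ∀ b : Fin n → Fin n → Bool,
      (((Finset.univ.filter (fun e : Sym2 (Fin n) => ¬ e.IsDiag)).powerset.filter
          (fun E => ∀ u ∈ J, ∀ v ∈ I,
            (Xor' (s(u, v) ∈ E) (s(μ u, μ v) ∈ E) ↔ b u v = true))).card)
          * 2 ^ (J.card * I.card)
        = (Finset.univ.filter (fun e : Sym2 (Fin n) => ¬ e.IsDiag)).powerset.card := by
  intro b
  rw [← card_product]
  convert card_xorClass_mul_two_pow (U := univ.filter fun e : Sym2 (Fin n) => ¬ e.IsDiag)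
    (injOn_mk_map_product μ.injective hJI')
    (fun p hp => mem_filter.2 ⟨mem_univ _, not_isDiag_mk_map μ.injective hJI' hp⟩)
    (fun p hp q hq => mk_ne_mk_map hII hJI hp hq) (univ.filter fun p => b p.1 p.2) using 3
  ext E
  simp only [xorClass, mem_filter, mem_product, Prod.forall, mem_univ, true_and, and_imp]
  exact and_congr_right fun _ =>
    ⟨fun h u v hu hv => h u hu v hv, fun h u hu v hv => h u v hu hv⟩

/-- Fix a permutation `μ` of `[n]`, `I` a set of non-fixed-points with `I ∩ μ(I) = ∅`, and `J`
disjoint from `I` with `μ(J) ∩ I = ∅`. For a uniformly random graph, the indicators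
`χ_{u,v}` (for `(u,v) ∈ J × I`) that exactly one of `{u,v}`, `{μ(u),μ(v)}` is an edge are each
`1` with probability exactly `1/2` and are mutually independent: every outcome pattern `b` is
attained by exactly a `2^{-|J×I|}` fraction of all graphs. -/
theorem stmt10 (n : ℕ) (μ : Equiv.Perm (Fin n)) (I J : Finset (Fin n))
    (hIT : ∀ v ∈ I, μ v ≠ v)
    (hII : Disjoint I (I.image ⇑μ))
    (hJI : Disjoint (J.image ⇑μ) I)
    (hJI' : Disjoint J I) :
    ∀ b : Fin n → Fin n → Bool,
      (((Finset.univ.filter (fun e : Sym2 (Fin n) => ¬ e.IsDiag)).powerset.filter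
          (fun E => ∀ u ∈ J, ∀ v ∈ I,
            (Xor' (s(u, v) ∈ E) (s(μ u, μ v) ∈ E) ↔ b u v = true))).card)
          * 2 ^ (J.card * I.card)
        = (Finset.univ.filter (fun e : Sym2 (Fin n) => ¬ e.IsDiag)).powerset.card :=
  stmt10_general n μ I J hII hJI hJI'
end

section
/- Let nmE : [N] × [N] → {0,1} be a non-malleable two-source (k, ε)-extractor and let T_0, T_1 ⊆ [N] with |T_0|, |T_1| ≥ 2^k and |T_σ ∪ μ_σ(T_σ)| ≤ N - 2 for σ ∈ {0,1}, where μ_0 : T_0 → [N] and μ_1 : T_1 → [N] are injections with no fixed points whose images avoid enough room to extend to derangements. Then |{(i,j) ∈ T_0 × T_1 : nmE(i,j) ≠ nmE(μ_0(i), μ_1(j))}| ≥ (0.5 - ε)·|T_0|·|T_1|. -/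
open Finset

/-- A probability mass function over `[N]` with min-entropy at least `k`. -/
def IsSource (k : ℕ) {N : ℕ} (μ : Fin N → ℝ) : Prop :=
  (∀ x, 0 ≤ μ x) ∧ (∑ x, μ x) = 1 ∧ ∀ x, μ x ≤ ((2 : ℝ) ^ k)⁻¹

/-- The joint distribution of `(nmE(X,Y), nmE(f(X), g(Y)))`. -/
noncomputable def jointDist {N : ℕ} (nmE : Fin N → Fin N → Bool)
    (f g : Fin N → Fin N) (μX μY : Fin N → ℝ) (a b : Bool) : ℝ :=
  ∑ x, ∑ y, μX x * μY y * (if nmE x y = a ∧ nmE (f x) (g y) = b then 1 else 0)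

/-- The distribution of `nmE(f(X), g(Y))`. -/
noncomputable def margDist {N : ℕ} (nmE : Fin N → Fin N → Bool)
    (f g : Fin N → Fin N) (μX μY : Fin N → ℝ) (b : Bool) : ℝ :=
  ∑ x, ∑ y, μX x * μY y * (if nmE (f x) (g y) = b then 1 else 0)

/-- Non-malleable two-source `(k, ε)`-extractor with one output bit. -/
def IsNMExtractor (ℓ k : ℕ) (ε : ℝ) (nmE : Fin (2 ^ ℓ) → Fin (2 ^ ℓ) → Bool) : Prop :=
  ∀ μX μY : Fin (2 ^ ℓ) → ℝ, IsSource k μX → IsSource k μY →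
    ∀ f g : Fin (2 ^ ℓ) → Fin (2 ^ ℓ), (∀ x, f x ≠ x) → (∀ y, g y ≠ y) →
      (1 / 2) * ∑ a : Bool, ∑ b : Bool,
        |jointDist nmE f g μX μY a b - (1 / 2) * margDist nmE f g μX μY b| ≤ ε

/-!
Take `X`, `Y` uniform on `T₀`, `T₁` and extend `μ₀`, `μ₁` to fixed-point-free maps `f`, `g` of
`[N]`. The two output bits agree exactly on the diagonal events `(a, a)`, and
`P[(a, b)] - P[b]/2` only changes sign when `a` is flipped, so the statistical distance to
`(U₁, nmE(f X, g Y))` bounds the agreement probability by `1/2 + ε`. On `T₀ × T₁` the maps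
`f`, `g` are `μ₀`, `μ₁`, so the disagreement probability is the fraction of disagreeing pairs.
-/
noncomputable def disagreeProb {N : ℕ} (nmE : Fin N → Fin N → Bool)
    (f g : Fin N → Fin N) (μX μY : Fin N → ℝ) : ℝ :=
  ∑ x, ∑ y, μX x * μY y * (if nmE x y ≠ nmE (f x) (g y) then 1 else 0)

noncomputable def uniformOn {N : ℕ} (T : Finset (Fin N)) : Fin N → ℝ :=
  fun x => if x ∈ T then (T.card : ℝ)⁻¹ else 0

lemma isSource_uniformOn {k N : ℕ} {T : Finset (Fin N)} (hT : 2 ^ k ≤ T.card) :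
    IsSource k (uniformOn T) := by
  have hpos : (0 : ℝ) < T.card := by exact_mod_cast (Nat.two_pow_pos k).trans_le hT
  refine ⟨fun x => ?_, ?_, fun x => ?_⟩
  · unfold uniformOn; split_ifs <;> positivity
  · simp only [uniformOn, Finset.sum_ite_mem, Finset.univ_inter, Finset.sum_const, nsmul_eq_mul]
    exact mul_inv_cancel₀ hpos.ne'
  · unfold uniformOn
    split_ifs
    · exact inv_anti₀ (by positivity) (by exact_mod_cast hT)
    · positivity

lemma exists_fixedPointFree_eqOn {α : Type*} [Nontrivial α] {s : Set α} {μ : α → α}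
    (hμ : ∀ x ∈ s, μ x ≠ x) : ∃ f : α → α, (∀ x, f x ≠ x) ∧ Set.EqOn f μ s := by
  classical
  choose other hother using exists_ne (α := α)
  refine ⟨s.piecewise μ other, fun x => ?_, Set.piecewise_eqOn _ _ _⟩
  by_cases hx : x ∈ s
  · simpa [hx] using hμ x hx
  · simpa [hx] using hother x

section Distributions

variable {N : ℕ} (nmE : Fin N → Fin N → Bool) (f g : Fin N → Fin N) (μX μY : Fin N → ℝ)

lemma jointDist_true_add_jointDist_false (b : Bool) :
    jointDist nmE f g μX μY true b + jointDist nmE f g μX μY false b =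
      margDist nmE f g μX μY b := by
  simp only [jointDist, margDist, ← Finset.sum_add_distrib]
  refine Finset.sum_congr rfl fun x _ => Finset.sum_congr rfl fun y _ => ?_
  cases nmE x y <;> simp

lemma margDist_true_add_margDist_false :
    margDist nmE f g μX μY true + margDist nmE f g μX μY false =
      (∑ x, μX x) * ∑ y, μY y := by
  simp only [margDist, ← Finset.sum_add_distrib, Finset.sum_mul_sum]
  refine Finset.sum_congr rfl fun x _ => Finset.sum_congr rfl fun y _ => ?_
  cases nmE (f x) (g y) <;> simp

lemma disagreeProb_add_jointDist_diag :
    disagreeProb nmE f g μX μY +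
        (jointDist nmE f g μX μY true true + jointDist nmE f g μX μY false false) =
      (∑ x, μX x) * ∑ y, μY y := by
  simp only [disagreeProb, jointDist, ← Finset.sum_add_distrib, Finset.sum_mul_sum]
  refine Finset.sum_congr rfl fun x _ => Finset.sum_congr rfl fun y _ => ?_
  cases nmE x y <;> cases nmE (f x) (g y) <;> simp

lemma one_half_sub_le_disagreeProb (hX : ∑ x, μX x = 1) (hY : ∑ y, μY y = 1) :
    1 / 2 - (1 / 2) * ∑ a : Bool, ∑ b : Bool,
        |jointDist nmE f g μX μY a b - (1 / 2) * margDist nmE f g μX μY b| ≤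
      disagreeProb nmE f g μX μY := by
  have hJ := jointDist_true_add_jointDist_false nmE f g μX μY
  have hM := margDist_true_add_margDist_false nmE f g μX μY
  have hP := disagreeProb_add_jointDist_diag nmE f g μX μY
  rw [hX, hY, one_mul] at hM hP
  set J := jointDist nmE f g μX μY
  set M := margDist nmE f g μX μY
  have hft : J false true - (1 / 2) * M true = -(J true true - (1 / 2) * M true) := by
    linarith [hJ true]
  have htf : J true false - (1 / 2) * M false = -(J false false - (1 / 2) * M false) := by
    linarith [hJ false]
  simp only [Fintype.sum_bool, hft, htf, abs_neg]
  linarith [le_abs_self (J true true - (1 / 2) * M true),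
    le_abs_self (J false false - (1 / 2) * M false)]

end Distributions

lemma sum_uniformOn_mul_uniformOn {N : ℕ} (T0 T1 : Finset (Fin N)) (h : Fin N → Fin N → ℝ) :
    ∑ x, ∑ y, uniformOn T0 x * uniformOn T1 y * h x y =
      ((T0.card : ℝ) * T1.card)⁻¹ * ∑ x ∈ T0, ∑ y ∈ T1, h x y := by
  have hterm : ∀ x y, uniformOn T0 x * uniformOn T1 y * h x y =
      if x ∈ T0 then (if y ∈ T1 then ((T0.card : ℝ) * T1.card)⁻¹ * h x y else 0) else 0 := by
    intro x y
    unfold uniformOn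
    split_ifs <;> simp [mul_comm]
  simp only [hterm, Finset.sum_ite_irrel, Finset.sum_const_zero, Finset.sum_ite_mem,
    Finset.univ_inter, Finset.mul_sum]

lemma disagreeProb_uniformOn {N : ℕ} (nmE : Fin N → Fin N → Bool) {f g μ0 μ1 : Fin N → Fin N}
    {T0 T1 : Finset (Fin N)} (hf : Set.EqOn f μ0 T0) (hg : Set.EqOn g μ1 T1) :
    disagreeProb nmE f g (uniformOn T0) (uniformOn T1) =
      ((T0 ×ˢ T1).filter (fun p => nmE p.1 p.2 ≠ nmE (μ0 p.1) (μ1 p.2))).card /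
        ((T0.card : ℝ) * T1.card) := by
  rw [disagreeProb, sum_uniformOn_mul_uniformOn, div_eq_inv_mul, Finset.card_filter,
    Nat.cast_sum, Finset.sum_product]
  congr 1
  refine Finset.sum_congr rfl fun x hx => Finset.sum_congr rfl fun y hy => ?_
  rw [hf hx, hg hy]
  push_cast
  rfl

theorem stmt17_general (ℓ k : ℕ) (ε : ℝ) (nmE : Fin (2 ^ ℓ) → Fin (2 ^ ℓ) → Bool)
    (hE : IsNMExtractor ℓ k ε nmE)
    (T0 T1 : Finset (Fin (2 ^ ℓ))) (h0 : 2 ^ k ≤ T0.card) (h1 : 2 ^ k ≤ T1.card)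
    (μ0 μ1 : Fin (2 ^ ℓ) → Fin (2 ^ ℓ))
    (hfix0 : ∀ i ∈ T0, μ0 i ≠ i) (hfix1 : ∀ j ∈ T1, μ1 j ≠ j) :
    (0.5 - ε) * (T0.card : ℝ) * (T1.card : ℝ) ≤
      (((T0 ×ˢ T1).filter (fun p => nmE p.1 p.2 ≠ nmE (μ0 p.1) (μ1 p.2))).card : ℝ) := by
  have hc0 : 0 < T0.card := (Nat.two_pow_pos k).trans_le h0
  have hc1 : 0 < T1.card := (Nat.two_pow_pos k).trans_le h1
  obtain ⟨i, hi⟩ := Finset.card_pos.mp hc0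
  have : Nontrivial (Fin (2 ^ ℓ)) := ⟨⟨μ0 i, i, hfix0 i hi⟩⟩
  obtain ⟨f, hfne, hf⟩ := exists_fixedPointFree_eqOn (s := T0) fun x hx => hfix0 x hx
  obtain ⟨g, hgne, hg⟩ := exists_fixedPointFree_eqOn (s := T1) fun y hy => hfix1 y hy
  have hX := isSource_uniformOn h0
  have hY := isSource_uniformOn h1
  have hP := (one_half_sub_le_disagreeProb nmE f g _ _ hX.2.1 hY.2.1).trans'
    (sub_le_sub_left (hE _ _ hX hY f g hfne hgne) _)
  rw [disagreeProb_uniformOn nmE hf hg,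
    le_div_iff₀ (mul_pos (Nat.cast_pos.mpr hc0) (Nat.cast_pos.mpr hc1))] at hP
  norm_num
  linarith

/-- For a non-malleable two-source `(k,ε)`-extractor `nmE`, sets `T₀, T₁ ⊆ [2^ℓ]` of size at
least `2^k`, and fixed-point-free injections `μ₀, μ₁` on them leaving room to extend to
derangements (`|T_σ ∪ μ_σ(T_σ)| ≤ 2^ℓ - 2`), the number of pairs
`(i,j) ∈ T₀ × T₁` with `nmE(i,j) ≠ nmE(μ₀(i), μ₁(j))` is at least
`(0.5 - ε)·|T₀|·|T₁|`. -/
theorem stmt17 (ℓ k : ℕ) (ε : ℝ) (nmE : Fin (2 ^ ℓ) → Fin (2 ^ ℓ) → Bool)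
    (hE : IsNMExtractor ℓ k ε nmE)
    (T0 T1 : Finset (Fin (2 ^ ℓ))) (h0 : 2 ^ k ≤ T0.card) (h1 : 2 ^ k ≤ T1.card)
    (μ0 μ1 : Fin (2 ^ ℓ) → Fin (2 ^ ℓ))
    (hinj0 : Set.InjOn μ0 T0) (hinj1 : Set.InjOn μ1 T1)
    (hfix0 : ∀ i ∈ T0, μ0 i ≠ i) (hfix1 : ∀ j ∈ T1, μ1 j ≠ j)
    (hroom0 : (T0 ∪ T0.image μ0).card ≤ 2 ^ ℓ - 2)
    (hroom1 : (T1 ∪ T1.image μ1).card ≤ 2 ^ ℓ - 2) :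
    (0.5 - ε) * (T0.card : ℝ) * (T1.card : ℝ) ≤
      (((T0 ×ˢ T1).filter (fun p => nmE p.1 p.2 ≠ nmE (μ0 p.1) (μ1 p.2))).card : ℝ) :=
  stmt17_general ℓ k ε nmE hE T0 T1 h0 h1 μ0 μ1 hfix0 hfix1
end

section
/- Let Φ ⊆ {0,1}^n be a set of strings, let G_n = ([n], E_n) be a fixed asymmetric graph of maximum degree d-2 with no isolated vertices, and for s ∈ {0,1}^n define G'_s = ([3n], E'_s) with E'_s = E_n ∪ {{i, n+i}, {i, 2n+i} : i ∈ [n]} ∪ {{n+i, 2n+i} : s_i = 1}. Then for s, r ∈ {0,1}^n, the graphs G'_s and G'_r are isomorphic if and only if s = r. -/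
/-!
A vertex `inl i` of the first block has at least three neighbours (its neighbour in `E_n` and
its two pendant vertices), while a vertex of the two outer blocks has at most two. Hence an
isomorphism `G'_w ≅ G'_r` preserves the first block, restricts there to an automorphism of
`G_n`, and so fixes it pointwise. Each outer vertex `inr y` is then sent to a neighbour of its
fixed base vertex, so the pair `{n+i, 2n+i}` is mapped onto itself, and its being an edge or not
reads off `w i = r i`.
-/

open Finset

/-- The graph `G'_w` on `[3n]` (vertices `Fin n ⊕ Fin n ⊕ Fin n`): a copy of `E_n` on the
first block, edges `{i, n+i}` and `{i, 2n+i}`, and the edge `{n+i, 2n+i}` iff `w_i = 1`. -/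
def Gstring (n : ℕ) (En : Finset (Sym2 (Fin n))) (w : Fin n → Bool) :
    Finset (Sym2 (Fin n ⊕ Fin n ⊕ Fin n)) :=
  En.image (Sym2.map (Sum.inl : Fin n → Fin n ⊕ Fin n ⊕ Fin n))
  ∪ Finset.univ.image (fun i : Fin n =>
      s((Sum.inl i : Fin n ⊕ Fin n ⊕ Fin n), Sum.inr (Sum.inl i)))
  ∪ Finset.univ.image (fun i : Fin n =>
      s((Sum.inl i : Fin n ⊕ Fin n ⊕ Fin n), Sum.inr (Sum.inr i)))
  ∪ (Finset.univ.filter (fun i : Fin n => w i = true)).image (fun i : Fin n =>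
      s((Sum.inr (Sum.inl i) : Fin n ⊕ Fin n ⊕ Fin n), Sum.inr (Sum.inr i)))

lemma Sym2.mk_mem_image_map_iff {α β : Type*} [DecidableEq β] {f : α → β}
    (hf : Function.Injective f) {S : Finset (Sym2 α)} {u v : α} :
    s(f u, f v) ∈ S.image (Sym2.map f) ↔ s(u, v) ∈ S := by
  rw [← Sym2.map_mk]
  exact (Sym2.map.injective hf).mem_finset_image

lemma Sym2.mem_image_map_inl_iff {α β : Type*} [DecidableEq α] [DecidableEq β]
    {S : Finset (Sym2 α)} {e : Sym2 (α ⊕ β)} :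
    e ∈ S.image (Sym2.map Sum.inl) ↔ ∃ a b, s(a, b) ∈ S ∧ e = s(.inl a, .inl b) := by
  constructor
  · intro h
    obtain ⟨e', he', rfl⟩ := mem_image.mp h
    induction e' using Sym2.inductionOn with
    | hf a b => exact ⟨a, b, he', rfl⟩
  · rintro ⟨a, b, hab, rfl⟩
    exact mem_image.mpr ⟨_, hab, rfl⟩

lemma exists_ne_mk_mem_of_card_pos {α : Type*} [DecidableEq α] {E : Finset (Sym2 α)}
    (hE : ∀ e ∈ E, ¬e.IsDiag) {v : α} (hv : 0 < (E.filter (fun e => v ∈ e)).card) :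
    ∃ u, u ≠ v ∧ s(v, u) ∈ E := by
  obtain ⟨e, he⟩ := card_pos.mp hv
  obtain ⟨he, hve⟩ := mem_filter.mp he
  obtain ⟨u, rfl⟩ := Sym2.mem_iff_exists.mp hve
  exact ⟨u, fun h => hE _ he (Sym2.mk_isDiag_iff.mpr h.symm), he⟩

lemma Finset.image_eq_self_of_image_subset {α : Type*} [DecidableEq α] {S : Finset α}
    {g : α → α} (hg : Function.Injective g) (h : S.image g ⊆ S) : S.image g = S :=
  eq_of_subset_of_card_le h (card_image_of_injective S hg).ge

section Gstring

variable {n : ℕ} {En : Finset (Sym2 (Fin n))} {w r : Fin n → Bool}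

lemma mem_Gstring {e : Sym2 (Fin n ⊕ Fin n ⊕ Fin n)} :
    e ∈ Gstring n En w ↔ (∃ i j, s(i, j) ∈ En ∧ e = s(.inl i, .inl j)) ∨
      ∃ i, e = s(.inl i, .inr (.inl i)) ∨ e = s(.inl i, .inr (.inr i)) ∨
        (w i ∧ e = s(.inr (.inl i), .inr (.inr i))) := by
  simp only [Gstring, mem_union, Sym2.mem_image_map_inl_iff]
  simp only [mem_image, mem_filter, mem_univ, true_and]
  aesop

lemma mk_inl_inl_mem_Gstring {i j : Fin n} :
    s(.inl i, .inl j) ∈ Gstring n En w ↔ s(i, j) ∈ En := by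
  grind [mem_Gstring, Sym2.eq_swap]

lemma mk_inl_inr_mem_Gstring {i : Fin n} {y : Fin n ⊕ Fin n} :
    s(.inl i, .inr y) ∈ Gstring n En w ↔ y = .inl i ∨ y = .inr i := by
  grind [mem_Gstring]

lemma mk_inr_inl_inr_inr_mem_Gstring {i : Fin n} :
    s(.inr (.inl i), .inr (.inr i)) ∈ Gstring n En w ↔ w i := by
  simp [mem_Gstring]

lemma eq_of_mk_inr_mem_Gstring {u : Fin n ⊕ Fin n ⊕ Fin n} {x : Fin n ⊕ Fin n}
    (h : s(u, .inr x) ∈ Gstring n En w) :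
    u = .inl (x.elim id id) ∨ u = .inr x.swap := by
  grind [mem_Gstring]

variable {π : Equiv.Perm (Fin n ⊕ Fin n ⊕ Fin n)}
  (hπ : (Gstring n En w).image (Sym2.map π) = Gstring n En r)
include hπ

lemma mk_mem_Gstring_iff_of_image_eq {u v : Fin n ⊕ Fin n ⊕ Fin n} :
    s(u, v) ∈ Gstring n En w ↔ s(π u, π v) ∈ Gstring n En r := by
  rw [← hπ, Sym2.mk_mem_image_map_iff π.injective]

lemma exists_apply_inl_eq_inl (hsimple : ∀ e ∈ En, ¬e.IsDiag)
    (hnoiso : ∀ v : Fin n, 0 < (En.filter (fun e => v ∈ e)).card) (i : Fin n) :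
    ∃ j, π (.inl i) = .inl j := by
  rcases hx : π (.inl i) with j | x
  · exact ⟨j, rfl⟩
  exfalso
  have hnbr : ∀ u, s(.inl i, u) ∈ Gstring n En w →
      π u = .inl (x.elim id id) ∨ π u = .inr x.swap := fun u hu =>
    eq_of_mk_inr_mem_Gstring (by
      rw [Sym2.eq_swap, ← hx]; exact (mk_mem_Gstring_iff_of_image_eq hπ).mp hu)
  obtain ⟨j, -, hij⟩ := exists_ne_mk_mem_of_card_pos hsimple (hnoiso i)
  -- `inl i` has three neighbours, but `inr x` only two
  have ha := hnbr _ (mk_inl_inl_mem_Gstring.mpr hij)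
  have hb := hnbr _ (mk_inl_inr_mem_Gstring.mpr (.inl rfl))
  have hc := hnbr _ (mk_inl_inr_mem_Gstring.mpr (.inr rfl))
  rcases ha with ha | ha <;> rcases hb with hb | hb <;> rcases hc with hc | hc <;>
    grind [π.injective]

lemma apply_inl_eq_inl (hsimple : ∀ e ∈ En, ¬e.IsDiag)
    (hasym : ∀ σ : Equiv.Perm (Fin n), En.image (Sym2.map σ) = En → σ = 1)
    (hnoiso : ∀ v : Fin n, 0 < (En.filter (fun e => v ∈ e)).card) (i : Fin n) :
    π (.inl i) = .inl i := by
  choose f hf using exists_apply_inl_eq_inl hπ hsimple hnoiso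
  have hf_inj : f.Injective := fun i j hij =>
    Sum.inl_injective (π.injective (by rw [hf, hf, hij]))
  let σ := Equiv.ofBijective f (Finite.injective_iff_bijective.mp hf_inj)
  have hσ : En.image (Sym2.map σ) = En := by
    refine Finset.image_eq_self_of_image_subset (Sym2.map.injective σ.injective) ?_
    intro e' he'
    obtain ⟨e, he, rfl⟩ := mem_image.mp he'
    induction e using Sym2.inductionOn with
    | hf u v =>
      have := (mk_mem_Gstring_iff_of_image_eq hπ).mp (mk_inl_inl_mem_Gstring.mpr he)
      rw [hf, hf] at this
      exact mk_inl_inl_mem_Gstring.mp this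
  rw [hf i, show f i = σ i from rfl, hasym σ hσ, Equiv.Perm.one_apply]

lemma map_mk_inr_eq (hfix : ∀ i, π (.inl i) = .inl i) (i : Fin n) :
    s(π (.inr (.inl i)), π (.inr (.inr i))) = s(.inr (.inl i), .inr (.inr i)) := by
  have hinr : ∀ y : Fin n ⊕ Fin n,
      π (.inr y) = .inr (.inl (y.elim id id)) ∨ π (.inr y) = .inr (.inr (y.elim id id)) := by
    intro y
    have hy := (mk_mem_Gstring_iff_of_image_eq hπ).mp
      (mk_inl_inr_mem_Gstring.mpr (by cases y <;> simp) : s(.inl (y.elim id id), .inr y) ∈ _)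
    rw [hfix] at hy
    rcases hπy : π (.inr y) with j | y'
    · have := π.injective ((hfix j).trans hπy.symm)
      simp at this
    · rw [hπy, mk_inl_inr_mem_Gstring] at hy
      rcases hy with rfl | rfl <;> simp
  have h1 := hinr (.inl i)
  have h2 := hinr (.inr i)
  simp only [Sum.elim_inl, Sum.elim_inr, id] at h1 h2
  rcases h1 with h1 | h1 <;> rcases h2 with h2 | h2 <;> grind [π.injective, Sym2.eq_swap]

end Gstring

theorem stmt18_general (n : ℕ)
    (En : Finset (Sym2 (Fin n)))
    (hsimple : ∀ e ∈ En, ¬ e.IsDiag)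
    (hasym : ∀ π : Equiv.Perm (Fin n), En.image (Sym2.map ⇑π) = En → π = 1)
    (hnoiso : ∀ v : Fin n, 0 < (En.filter (fun e => v ∈ e)).card)
    (w r : Fin n → Bool) :
    (∃ π : Equiv.Perm (Fin n ⊕ Fin n ⊕ Fin n),
        (Gstring n En w).image (Sym2.map ⇑π) = Gstring n En r) ↔ w = r := by
  refine ⟨fun ⟨π, hπ⟩ => funext fun i => ?_, fun h => ⟨1, by simp [h]⟩⟩
  have hfix := apply_inl_eq_inl hπ hsimple hasym hnoiso
  rw [Bool.eq_iff_iff, ← mk_inr_inl_inr_inr_mem_Gstring, ← mk_inr_inl_inr_inr_mem_Gstring,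
    mk_mem_Gstring_iff_of_image_eq hπ, map_mk_inr_eq hπ hfix]

/-- For a fixed asymmetric graph `G_n` of maximum degree `d - 2` with no isolated vertices,
the graphs `G'_w` and `G'_r` are isomorphic if and only if `w = r`. -/
theorem stmt18 (n d : ℕ)
    (En : Finset (Sym2 (Fin n)))
    (hsimple : ∀ e ∈ En, ¬ e.IsDiag)
    (hasym : ∀ π : Equiv.Perm (Fin n), En.image (Sym2.map ⇑π) = En → π = 1)
    (hdeg : ∀ v : Fin n, (En.filter (fun e => v ∈ e)).card ≤ d - 2)
    (hnoiso : ∀ v : Fin n, 0 < (En.filter (fun e => v ∈ e)).card)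
    (w r : Fin n → Bool) :
    (∃ π : Equiv.Perm (Fin n ⊕ Fin n ⊕ Fin n),
        (Gstring n En w).image (Sym2.map ⇑π) = Gstring n En r) ↔ w = r :=
  stmt18_general n En hsimple hasym hnoiso w r
end
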